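/- Let γ := gaussianReal 0 1, let v : ℝ → ℝ≥0 be measurable with ∫ y, ((v y : ℝ))² ∂γ < ∞, such that y ↦ gaussianReal 0 (v y) is a measurable family of measures, and define μ := γ.bind (fun y => gaussianReal 0 (v y)). If v is not γ-almost-everywhere equal to a constant, then μ is not a Gaussian measure; that is, for all m : ℝ and t : ℝ≥0, μ ≠ gaussianReal m t. (Indeed, ∫ x⁴ dμ = 3∫ v² dγ > 3(∫ v dγ)² = 3(∫ x² dμ)², whereas every Gaussian measure satisfies ∫ x⁴ = 3(∫ x²)² when centered.) -/

import Mathlib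

/-!
Integrating `d/dx (x ^ (n + 1) * exp (-x ^ 2 / (2 v)))` over the line gives the moment recursion
`E[X ^ (n + 2)] = (n + 1) v E[X ^ n]` for `X ~ N(0, v)`, so `E[X²] = v` and `E[X⁴] = 3 v²`.
The mixture is invariant under `x ↦ -x`, so a Gaussian equal to it is centred, say `N(0, t)`.
Integrating `x²` and `x⁴` first against `N(0, v y)` and then against `γ` gives `∫ v dγ = t` and
`∫ v² dγ = t²`: the variance of `v` under `γ` vanishes, so `v = t` almost everywhere.
-/

open MeasureTheory ProbabilityTheory Real
open scoped ENNReal NNReal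

namespace MeasureTheory.Measure

variable {α β E : Type*} {mα : MeasurableSpace α} {mβ : MeasurableSpace β}
  [NormedAddCommGroup E] [NormedSpace ℝ E] {μ : Measure α} {κ : Kernel α β}

theorem integral_comp {f : β → E} (hf : Integrable f (κ ∘ₘ μ)) :
    ∫ x, f x ∂(κ ∘ₘ μ) = ∫ a, ∫ x, f x ∂κ a ∂μ := by
  rw [comp_eq_comp_const_apply] at hf ⊢
  exact Kernel.integral_comp hf

theorem map_comp_eq_self {f : β → β} (hf : Measurable f) (h : ∀ a, (κ a).map f = κ a) :
    (κ ∘ₘ μ).map f = κ ∘ₘ μ := by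
  rw [map_comp μ κ hf]
  congr
  ext a : 1
  rw [Kernel.map_apply κ hf, h]

end MeasureTheory.Measure

namespace ProbabilityTheory

theorem ae_eq_integral_of_integral_sq_eq_sq_integral {Ω : Type*} {mΩ : MeasurableSpace Ω}
    {μ : Measure Ω} [IsProbabilityMeasure μ] {X : Ω → ℝ} (hX : MemLp X 2 μ)
    (h : μ[X ^ 2] = μ[X] ^ 2) : ∀ᵐ ω ∂μ, X ω = μ[X] :=
  ae_eq_integral_of_variance_eq_zero hX (by rw [variance_eq_sub hX, h, sub_self])

theorem integrable_pow_gaussianReal (m : ℝ) (v : ℝ≥0) (n : ℕ) :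
    Integrable (fun x ↦ x ^ n) (gaussianReal m v) :=
  integrable_pow_of_mem_interior_integrableExpSet (by simp) n

theorem eq_zero_of_map_neg_gaussianReal {m : ℝ} {v : ℝ≥0}
    (h : (gaussianReal m v).map (fun x ↦ -x) = gaussianReal m v) : m = 0 := by
  rw [gaussianReal_map_neg, gaussianReal_ext_iff] at h
  linarith [h.1]

theorem integral_pow_add_two_gaussianReal_zero (v : ℝ≥0) (n : ℕ) :
    ∫ x, x ^ (n + 2) ∂gaussianReal 0 v = (n + 1) * v * ∫ x, x ^ n ∂gaussianReal 0 v := by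
  rcases eq_or_ne v 0 with rfl | hv
  · simp
  set b : ℝ := (2 * v)⁻¹
  have hb : 0 < b := by positivity
  have hbv : 2 * b * v = 1 := by
    simp only [b]
    field_simp
  have hint (k : ℕ) : Integrable fun x : ℝ ↦ x ^ k * exp (-b * x ^ 2) := by
    simpa using integrable_rpow_mul_exp_neg_mul_sq hb (neg_one_lt_zero.trans_le k.cast_nonneg)
  have hmoment (k : ℕ) : ∫ x, x ^ k ∂gaussianReal 0 v
      = (√(2 * π * v))⁻¹ * ∫ x, x ^ k * exp (-b * x ^ 2) := by
    rw [integral_gaussianReal_eq_integral_smul hv, ← integral_const_mul]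
    congr with x
    rw [gaussianPDFReal, smul_eq_mul, sub_zero, show -x ^ 2 / (2 * v) = -b * x ^ 2 by ring]
    ring
  have hderiv (x : ℝ) : HasDerivAt (fun x ↦ x ^ (n + 1) * exp (-b * x ^ 2))
      ((n + 1) * (x ^ n * exp (-b * x ^ 2)) - 2 * b * (x ^ (n + 2) * exp (-b * x ^ 2))) x := by
    refine ((hasDerivAt_pow (n + 1) x).fun_mul
      ((hasDerivAt_pow 2 x).const_mul (-b)).exp).congr_deriv ?_
    push_cast
    ring
  have hparts := integral_eq_zero_of_hasDerivAt_of_integrable hderiv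
    (((hint n).const_mul _).sub ((hint (n + 2)).const_mul _)) (hint (n + 1))
  rw [integral_sub ((hint n).const_mul _) ((hint (n + 2)).const_mul _), integral_const_mul,
    integral_const_mul] at hparts
  rw [hmoment, hmoment]
  linear_combination (-(√(2 * π * v))⁻¹ * v) * hparts
    - (√(2 * π * v))⁻¹ * (∫ x, x ^ (n + 2) * exp (-b * x ^ 2)) * hbv

theorem integral_sq_gaussianReal_zero (v : ℝ≥0) : ∫ x, x ^ 2 ∂gaussianReal 0 v = v := by
  simpa using integral_pow_add_two_gaussianReal_zero v 0

theorem integral_pow_four_gaussianReal_zero (v : ℝ≥0) :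
    ∫ x, x ^ 4 ∂gaussianReal 0 v = 3 * (v : ℝ) ^ 2 := by
  rw [integral_pow_add_two_gaussianReal_zero v 2, integral_sq_gaussianReal_zero]
  norm_num
  ring

end ProbabilityTheory

/-- A Gaussian scale mixture over a standard Gaussian mixing measure, with a mixing
variance that is not almost-everywhere constant, is not a Gaussian measure. -/
theorem gaussian_scale_mixture_not_gaussian
    (v : ℝ → ℝ≥0) (hv : Measurable v)
    (hker : Measurable fun y => gaussianReal 0 (v y))
    (hint : Integrable (fun y => ((v y : ℝ)) ^ 2) (gaussianReal 0 1))
    (hvc : ∀ c : ℝ≥0, ¬ (v =ᵐ[gaussianReal 0 1] fun _ => c)) :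
    ∀ (m : ℝ) (t : ℝ≥0),
      (gaussianReal 0 1).bind (fun y => gaussianReal 0 (v y)) ≠ gaussianReal m t := by
  intro m t h
  let κ : Kernel ℝ ℝ := ⟨fun y ↦ gaussianReal 0 (v y), hker⟩
  change κ ∘ₘ gaussianReal 0 1 = gaussianReal m t at h
  obtain rfl : m = 0 := eq_zero_of_map_neg_gaussianReal <| by
    rw [← h, Measure.map_comp_eq_self measurable_neg fun y ↦ by simp [κ, gaussianReal_map_neg]]
  have hmoment (k : ℕ) : ∫ x, x ^ k ∂gaussianReal 0 t
      = ∫ y, ∫ x, x ^ k ∂gaussianReal 0 (v y) ∂gaussianReal 0 1 := by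
    rw [← h, Measure.integral_comp (h ▸ integrable_pow_gaussianReal 0 t k)]
    rfl
  have h2 : ∫ y, (v y : ℝ) ∂gaussianReal 0 1 = t := by
    simpa [integral_sq_gaussianReal_zero] using (hmoment 2).symm
  have h4 : ∫ y, (v y : ℝ) ^ 2 ∂gaussianReal 0 1 = (t : ℝ) ^ 2 := by
    simpa [integral_pow_four_gaussianReal_zero, integral_const_mul] using (hmoment 4).symm
  have hL2 : MemLp (fun y ↦ (v y : ℝ)) 2 (gaussianReal 0 1) :=
    (memLp_two_iff_integrable_sq hv.coe_nnreal_real.aestronglyMeasurable).2 hint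
  refine hvc t ?_
  filter_upwards [ae_eq_integral_of_integral_sq_eq_sq_integral hL2 (by simp [h2, h4])] with y hy
  exact NNReal.coe_injective (hy.trans h2)
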